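/- Let Ω ⊆ ℝ² be compact convex with nonempty interior, let K ⊆ Ω be compact convex with nonempty interior, let s, t ∈ frontier K with s ≠ t, let ε > 0 with t ∉ Metric.closedBall s ε, and let Γ ⊆ ℝ² satisfy frontier K ∩ Metric.closedBall s ε ⊆ Γ (the protected part contains a neighborhood of s in the network). Define Conn'(θ,ρ) := ∃ connected S ⊆ frontier K with s, t ∈ S and (S \ Γ) ∩ R(θ,ρ) = ∅, and Conn(θ,ρ) := ∃ connected S ⊆ frontier K with s, t ∈ S and S ∩ R(θ,ρ) = ∅. Then volume{(θ,ρ) ∈ [0,2π) × ℝ : G(θ,ρ) ∩ Ω ≠ ∅ ∧ ¬Conn'(θ,ρ)} < volume{(θ,ρ) ∈ [0,2π) × ℝ : G(θ,ρ) ∩ Ω ≠ ∅ ∧ ¬Conn(θ,ρ)}. (Theorem 4(1) of the paper for a convex two-route network: protection of a part containing the terminal s strictly improves the probability of connecting s and t over the weakest arrangement.) -/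

import Mathlib

/-!
Lines that disconnect `s` from `t` despite the protection of `Γ` also disconnect them without
it, so it suffices to find a set of lines of positive measure that disconnect `s` from `t`
without protection but not with it.

Let `ν` be an outer unit normal of `K` at `s` and `w ⊥ ν` a unit vector with `⟪t - s, w⟫ ≤ 0`.
The line parallel to `ν` through an interior point of `K` slightly on the `w`-side of `s` cuts
off an arc `S ∋ s, t` of `∂K` on which `⟪x - s, w⟫ ≤ ε / 4`; if there is no such interior point,
`K` lies on the other side of `s` and `S = ∂K` will do. The arc is connected since radial
projection from an interior point maps a closed half of the unit circle onto it. A line whose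
normal is close to `3/5 ν + 4/5 w` and which passes just inside `s` puts `s` in the disaster
area, destroying every route, but its disaster area meets `S` only within `ε` of `s`, where
everything is protected. Such lines form a nonempty open set of parameters.
-/

open MeasureTheory Real Set
open scoped InnerProductSpace

noncomputable def u (θ : ℝ) : EuclideanSpace ℝ (Fin 2) :=
  !₂[Real.cos θ, Real.sin θ]

/-- The (directed) line with normal direction `u θ` at signed distance `ρ`. -/
def G (θ ρ : ℝ) : Set (EuclideanSpace ℝ (Fin 2)) :=
  {x | ⟪x, u θ⟫_ℝ = ρ}

/-- The disaster area: the closed half-plane to the `u θ` side of the line `G θ ρ`. -/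
def R (θ ρ : ℝ) : Set (EuclideanSpace ℝ (Fin 2)) :=
  {x | ⟪x, u θ⟫_ℝ ≥ ρ}

/-- Support integral: integral of the support function over all directions;
equals the perimeter of the convex hull. -/
noncomputable def P (X : Set (EuclideanSpace ℝ (Fin 2))) : ℝ :=
  ∫ θ in (0:ℝ)..(2 * Real.pi), sSup {r : ℝ | ∃ x ∈ X, r = ⟪x, u θ⟫_ℝ}

open Bornology Topology Metric Pointwise

section InnerProductSpace

variable {E : Type*} [NormedAddCommGroup E] [InnerProductSpace ℝ E]

theorem isConnected_sphere_inter_inner_nonpos {n : E} (hn : ‖n‖ = 1) :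
    IsConnected (sphere (0 : E) 1 ∩ {y | ⟪y, n⟫_ℝ ≤ 0}) := by
  -- the closed hemisphere is the graph of `y ↦ -√(1 - ‖y‖²)` over the equatorial disc
  set D : Set E := closedBall 0 1 ∩ {y | ⟪y, n⟫_ℝ = 0}
  set f : E → E := fun y => y - √(1 - ‖y‖ ^ 2) • n
  have hD : IsConnected D := by
    refine ⟨⟨0, by simp [D]⟩, ((convex_closedBall 0 1).inter ?_).isPreconnected⟩
    exact convex_hyperplane
      ⟨fun x y => inner_add_left x y n, fun c x => real_inner_smul_left x n c⟩ 0
  have hn2 : ⟪n, n⟫_ℝ = 1 := by rw [real_inner_self_eq_norm_sq, hn, one_pow]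
  have himage : f '' D = sphere 0 1 ∩ {y | ⟪y, n⟫_ℝ ≤ 0} := by
    apply Subset.antisymm
    · rintro _ ⟨y, ⟨hy, hyn : ⟪y, n⟫_ℝ = 0⟩, rfl⟩
      rw [mem_closedBall_zero_iff] at hy
      have h1 : 0 ≤ 1 - ‖y‖ ^ 2 := by nlinarith [norm_nonneg y]
      refine ⟨?_, ?_⟩
      · rw [mem_sphere_zero_iff_norm, ← pow_eq_one_iff_of_nonneg (norm_nonneg _) two_ne_zero,
          norm_sub_sq_real, real_inner_smul_right, hyn, norm_smul, hn, Real.norm_eq_abs,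
          abs_of_nonneg (Real.sqrt_nonneg _), mul_one, Real.sq_sqrt h1]
        ring
      · show ⟪f y, n⟫_ℝ ≤ 0
        simp only [f, inner_sub_left, real_inner_smul_left, hyn, hn2]
        linarith [Real.sqrt_nonneg (1 - ‖y‖ ^ 2)]
    · rintro x ⟨hx, hxn : ⟪x, n⟫_ℝ ≤ 0⟩
      rw [mem_sphere_zero_iff_norm] at hx
      set y := x - ⟪x, n⟫_ℝ • n
      have hyn : ⟪y, n⟫_ℝ = 0 := by
        simp only [y, inner_sub_left, real_inner_smul_left, hn2]; ring
      have hy : ‖y‖ ^ 2 = 1 - ⟪x, n⟫_ℝ ^ 2 := by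
        simp only [y]
        rw [norm_sub_sq_real, real_inner_smul_right, norm_smul, hn, Real.norm_eq_abs, hx]
        nlinarith [sq_abs ⟪x, n⟫_ℝ]
      refine ⟨y, ⟨?_, hyn⟩, ?_⟩
      · rw [mem_closedBall_zero_iff]
        nlinarith [norm_nonneg y, sq_nonneg ⟪x, n⟫_ℝ]
      · simp only [f]
        rw [hy, sub_sub_cancel, Real.sqrt_sq_eq_abs, abs_of_nonpos hxn]
        simp only [y]; module
  exact himage ▸ hD.image f (by fun_prop)

theorem exists_continuous_image_sphere_eq_frontier {K : Set E} (hK : Convex ℝ K)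
    (hKb : IsBounded K) {z : E} (hz : z ∈ interior K) :
    ∃ g : E → E, Continuous g ∧ g '' sphere 0 1 = frontier K ∧
      ∀ y ∈ sphere (0 : E) 1, ∃ c : ℝ, 0 < c ∧ g y = z + c • y := by
  set C : Set E := -z +ᵥ K
  have hC0 : C ∈ 𝓝 0 := by
    rw [← mem_interior_iff_mem_nhds, interior_vadd, mem_vadd_set]
    exact ⟨z, hz, neg_add_cancel z⟩
  have hCb : IsVonNBounded ℝ C := NormedSpace.isVonNBounded_of_isBounded _ (hKb.vadd (-z))
  set e := gaugeRescaleHomeomorph (ball (0 : E) 1) C (convex_ball 0 1) (ball_mem_nhds 0 one_pos)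
    (NormedSpace.isVonNBounded_ball _ _ _) (hK.vadd (-z)) hC0 hCb
  refine ⟨fun y => z + e y, continuous_const.add e.continuous, ?_, ?_⟩
  · have he : e '' sphere 0 1 = -z +ᵥ frontier K := by
      rw [← frontier_ball (0 : E) one_ne_zero, ← closure_sdiff_interior, image_sdiff e.injective,
        image_gaugeRescaleHomeomorph_closure, image_gaugeRescaleHomeomorph_interior, closure_vadd,
        interior_vadd, ← vadd_set_sdiff, closure_sdiff_interior]
    rw [← image_image (z + ·) e, he, ← image_vadd, image_image]
    simp
  · intro y hy
    rw [mem_sphere_zero_iff_norm] at hy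
    have hy0 : y ≠ 0 := norm_ne_zero_iff.mp (hy.symm ▸ one_ne_zero)
    refine ⟨(gauge C y)⁻¹, inv_pos.mpr ((gauge_pos (absorbent_nhds_zero hC0) hCb).mpr hy0), ?_⟩
    simp [e, gaugeRescaleHomeomorph, gaugeRescaleEquiv, gaugeRescale, gauge_ball, hy]

theorem isConnected_frontier_inter_inner_sub_nonpos {K : Set E} (hK : Convex ℝ K)
    (hKb : IsBounded K) {z : E} (hz : z ∈ interior K) {n : E} (hn : ‖n‖ = 1) :
    IsConnected (frontier K ∩ {x | ⟪x - z, n⟫_ℝ ≤ 0}) := by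
  obtain ⟨g, hg, hgK, hray⟩ := exists_continuous_image_sphere_eq_frontier hK hKb hz
  have hsign : ∀ y ∈ sphere (0 : E) 1, ⟪g y - z, n⟫_ℝ ≤ 0 ↔ ⟪y, n⟫_ℝ ≤ 0 := by
    intro y hy
    obtain ⟨c, hc, hgy⟩ := hray y hy
    rw [hgy, add_sub_cancel_left, real_inner_smul_left]
    constructor <;> intro h <;> nlinarith
  have himage :
      g '' (sphere 0 1 ∩ {y | ⟪y, n⟫_ℝ ≤ 0}) = frontier K ∩ {x | ⟪x - z, n⟫_ℝ ≤ 0} := by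
    rw [← hgK]
    ext x
    constructor
    · rintro ⟨y, ⟨hy, hyn⟩, rfl⟩
      exact ⟨mem_image_of_mem g hy, (hsign y hy).mpr hyn⟩
    · rintro ⟨⟨y, hy, rfl⟩, hyn⟩
      exact ⟨y, ⟨hy, (hsign y hy).mp hyn⟩, rfl⟩
  exact himage ▸ (isConnected_sphere_inter_inner_nonpos hn).image g hg.continuousOn

theorem isConnected_frontier (hE : 1 < Module.rank ℝ E) {K : Set E} (hK : Convex ℝ K)
    (hKb : IsBounded K) {z : E} (hz : z ∈ interior K) : IsConnected (frontier K) := by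
  obtain ⟨g, hg, hgK, -⟩ := exists_continuous_image_sphere_eq_frontier hK hKb hz
  exact hgK ▸ (isConnected_sphere hE 0 zero_le_one).image g hg.continuousOn

theorem exists_interior_inner_sub_mem_Icc_or_inner_sub_nonpos {K : Set E} (hK : Convex ℝ K)
    (hKint : (interior K).Nonempty) {s : E} (hs : s ∈ closure K) (w : E) {r : ℝ} (hr : 0 < r) :
    (∃ z ∈ interior K, ⟪z - s, w⟫_ℝ ∈ Icc 0 r) ∨ ∀ x ∈ closure K, ⟪x - s, w⟫_ℝ ≤ 0 := by
  set f : E → ℝ := fun x => ⟪x - s, w⟫_ℝ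
  have hf : Continuous f := by fun_prop
  have hcl := hK.closure_interior_eq_closure_of_nonempty_interior hKint
  by_cases hpos : ∃ z ∈ interior K, 0 < f z
  · left
    obtain ⟨z₁, hz₁, hfz₁⟩ := hpos
    obtain ⟨z₂, hfz₂, hz₂⟩ := mem_closure_iff.mp (hcl ▸ hs) {x | f x < min r (f z₁)}
      (isOpen_lt hf continuous_const) (by simpa [f] using lt_min hr hfz₁)
    have hfz₂' : f z₂ < min r (f z₁) := hfz₂
    obtain ⟨z, hz, hfz⟩ := hK.interior.isPreconnected.intermediate_value hz₂ hz₁ hf.continuousOn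
      (show max 0 (f z₂) ∈ Icc (f z₂) (f z₁) from
        ⟨le_max_right _ _, max_le hfz₁.le (hfz₂'.trans_le (min_le_right _ _)).le⟩)
    refine ⟨z, hz, ?_⟩
    change f z ∈ Icc 0 r
    rw [hfz]
    exact ⟨le_max_left _ _, max_le hr.le (hfz₂'.trans_le (min_le_left _ _)).le⟩
  · right
    push Not at hpos
    exact fun x hx => closure_minimal hpos (isClosed_le hf continuous_const) (hcl ▸ hx)

theorem exists_isConnected_subset_frontier_inner_sub_le (hE : 1 < Module.rank ℝ E) {K : Set E}
    (hK : Convex ℝ K) (hKb : IsBounded K) (hKint : (interior K).Nonempty) {s t : E}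
    (hs : s ∈ frontier K) (ht : t ∈ frontier K) {w : E} (hw : ‖w‖ = 1)
    (hwt : ⟪t - s, w⟫_ℝ ≤ 0) {r : ℝ} (hr : 0 < r) :
    ∃ S ⊆ frontier K, IsConnected S ∧ s ∈ S ∧ t ∈ S ∧ ∀ x ∈ S, ⟪x - s, w⟫_ℝ ≤ r := by
  have hsplit (x z : E) : ⟪x - s, w⟫_ℝ = ⟪x - z, w⟫_ℝ + ⟪z - s, w⟫_ℝ := by
    rw [← inner_add_left, sub_add_sub_cancel]
  rcases exists_interior_inner_sub_mem_Icc_or_inner_sub_nonpos hK hKint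
    (frontier_subset_closure hs) w hr with ⟨z, hz, hzs⟩ | hKw
  · refine ⟨frontier K ∩ {x | ⟪x - z, w⟫_ℝ ≤ 0}, inter_subset_left,
      isConnected_frontier_inter_inner_sub_nonpos hK hKb hz hw, ⟨hs, ?_⟩, ⟨ht, ?_⟩, ?_⟩
    · change ⟪s - z, w⟫_ℝ ≤ 0
      linarith [hsplit s z, hzs.1, show ⟪s - s, w⟫_ℝ = 0 by simp]
    · change ⟪t - z, w⟫_ℝ ≤ 0
      linarith [hsplit t z, hzs.1]
    · rintro x ⟨-, hxz : ⟪x - z, w⟫_ℝ ≤ 0⟩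
      linarith [hsplit x z, hzs.2]
  · obtain ⟨z, hz⟩ := hKint
    exact ⟨frontier K, subset_rfl, isConnected_frontier hE hK hKb hz, hs, ht,
      fun x hx => (hKw x (frontier_subset_closure hx)).trans hr.le⟩

theorem exists_norm_eq_one_inner_sub_nonpos [CompleteSpace E] {K : Set E} (hK : Convex ℝ K)
    (hKint : (interior K).Nonempty) {s : E} (hs : s ∉ interior K) :
    ∃ ν : E, ‖ν‖ = 1 ∧ ∀ x ∈ K, ⟪x - s, ν⟫_ℝ ≤ 0 := by
  obtain ⟨f, hf⟩ := geometric_hahn_banach_open_point hK.interior isOpen_interior hs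
  set ν₀ := (InnerProductSpace.toDual ℝ E).symm f
  have hν₀ (x : E) : ⟪x - s, ν₀⟫_ℝ = f x - f s := by
    rw [real_inner_comm, inner_sub_right, InnerProductSpace.toDual_symm_apply,
      InnerProductSpace.toDual_symm_apply]
  have hne : ν₀ ≠ 0 := by
    obtain ⟨z, hz⟩ := hKint
    intro h
    have := hν₀ z
    rw [h, inner_zero_right] at this
    linarith [hf z hz]
  have hK' : ∀ x ∈ K, f x ≤ f s := fun x hx =>
    closure_minimal (fun y hy => (hf y hy).le) (isClosed_le f.continuous continuous_const)
      (hK.closure_interior_eq_closure_of_nonempty_interior hKint ▸ subset_closure hx)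
  refine ⟨‖ν₀‖⁻¹ • ν₀, norm_smul_inv_norm hne, fun x hx => ?_⟩
  rw [real_inner_smul_right, hν₀]
  exact mul_nonpos_of_nonneg_of_nonpos (by positivity) (sub_nonpos.mpr (hK' x hx))

end InnerProductSpace

theorem measure_lt_measure_of_subset {α : Type*} [MeasurableSpace α] {μ : Measure α}
    {s t B : Set α} (hst : s ⊆ t) (hs : μ s ≠ ⊤) (hB : MeasurableSet B) (hBpos : 0 < μ B)
    (hBt : B ⊆ t \ s) : μ s < μ t :=
  calc μ s < μ s + μ B := ENNReal.lt_add_right hs hBpos.ne'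
    _ = μ (s ∪ B) := (measure_union (disjoint_sdiff_right.mono_right hBt) hB).symm
    _ ≤ μ t := measure_mono (union_subset hst (hBt.trans sdiff_subset))

local notation "ℝ²" => EuclideanSpace ℝ (Fin 2)

theorem inner_fin_two (x y : ℝ²) : ⟪x, y⟫_ℝ = x 0 * y 0 + x 1 * y 1 := by
  simp only [PiLp.inner_apply, Fin.sum_univ_two, RCLike.inner_apply, conj_trivial]
  ring

theorem norm_fin_two (x : ℝ²) : ‖x‖ = √(x 0 ^ 2 + x 1 ^ 2) := by
  simp [EuclideanSpace.norm_eq, Fin.sum_univ_two]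

theorem continuous_u : Continuous u := by
  unfold u; fun_prop

theorem norm_u (θ : ℝ) : ‖u θ‖ = 1 := by
  simp [norm_fin_two, u]

theorem exists_mem_Icc_u_eq {p : ℝ²} (hp : ‖p‖ = 1) : ∃ φ ∈ Icc 0 (2 * π), u φ = p := by
  have hp2 : p 0 ^ 2 + p 1 ^ 2 = 1 := by
    rw [norm_fin_two, Real.sqrt_eq_one] at hp; exact hp
  have h0 : -1 ≤ p 0 := by nlinarith
  have h1 : p 0 ≤ 1 := by nlinarith
  have hsin : √(1 - p 0 ^ 2) = |p 1| := by rw [← Real.sqrt_sq_eq_abs]; congr 1; linarith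
  rcases le_total 0 (p 1) with hp1 | hp1
  · refine ⟨Real.arccos (p 0),
      ⟨Real.arccos_nonneg _, by linarith [Real.arccos_le_pi (p 0), pi_pos]⟩, ?_⟩
    ext i; fin_cases i <;>
      simp [u, Real.cos_arccos h0 h1, Real.sin_arccos, hsin, abs_of_nonneg hp1]
  · refine ⟨2 * π - Real.arccos (p 0),
      ⟨by linarith [Real.arccos_le_pi (p 0), pi_pos], by linarith [Real.arccos_nonneg (p 0)]⟩, ?_⟩
    ext i; fin_cases i <;>
      simp [u, Real.cos_arccos h0 h1, Real.sin_arccos, hsin, abs_of_nonpos hp1]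

theorem exists_orthonormal_frame {ν : ℝ²} (hν : ‖ν‖ = 1) (a : ℝ²) :
    ∃ w : ℝ², ‖w‖ = 1 ∧ ⟪ν, w⟫_ℝ = 0 ∧ ⟪a, w⟫_ℝ ≤ 0 ∧
      ∀ x y : ℝ², ⟪x, y⟫_ℝ = ⟪x, ν⟫_ℝ * ⟪y, ν⟫_ℝ + ⟪x, w⟫_ℝ * ⟪y, w⟫_ℝ := by
  have hν2 : ν 0 ^ 2 + ν 1 ^ 2 = 1 := by
    rw [norm_fin_two, Real.sqrt_eq_one] at hν; exact hν
  set w₀ : ℝ² := !₂[-ν 1, ν 0]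
  have hw₀ : ‖w₀‖ = 1 := by simp [w₀, norm_fin_two, add_comm, hν2]
  have hνw₀ : ⟪ν, w₀⟫_ℝ = 0 := by
    simp only [w₀, inner_fin_two, Matrix.cons_val_zero, Matrix.cons_val_one,
      Matrix.cons_val_fin_one]
    ring
  have hframe (x y : ℝ²) : ⟪x, y⟫_ℝ = ⟪x, ν⟫_ℝ * ⟪y, ν⟫_ℝ + ⟪x, w₀⟫_ℝ * ⟪y, w₀⟫_ℝ := by
    simp only [w₀, inner_fin_two, Matrix.cons_val_zero, Matrix.cons_val_one,
      Matrix.cons_val_fin_one]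
    linear_combination -(x 0 * y 0 + x 1 * y 1) * hν2
  rcases le_total ⟪a, w₀⟫_ℝ 0 with ha | ha
  · exact ⟨w₀, hw₀, hνw₀, ha, hframe⟩
  · refine ⟨-w₀, by rw [norm_neg, hw₀], by rw [inner_neg_right, hνw₀, neg_zero],
      by rw [inner_neg_right]; linarith, fun x y => ?_⟩
    simp only [inner_neg_right, hframe x y]
    ring

theorem sqrt_sq_add_sq_le {X Y c σ ε : ℝ} (hX : X ≤ 0) (hY : Y ≤ ε / 4) (hc : 1 / 2 < c)
    (hσ : 1 / 4 < σ) (hσ1 : σ ≤ 1) (h : -(ε / 16) ≤ c * X + σ * Y) :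
    √(X ^ 2 + Y ^ 2) ≤ ε := by
  have hε : 0 ≤ ε := by nlinarith
  have hYlow : -(ε / 4) ≤ Y := by nlinarith
  have hσY : σ * Y ≤ ε / 4 := by nlinarith
  have hXlow : -(5 * ε / 8) ≤ X := by nlinarith
  rw [Real.sqrt_le_iff]
  exact ⟨hε, by nlinarith⟩

theorem mem_closedBall_of_mem_R {ν w s x : ℝ²} {θ ρ ε : ℝ}
    (hframe : ∀ x y : ℝ², ⟪x, y⟫_ℝ = ⟪x, ν⟫_ℝ * ⟪y, ν⟫_ℝ + ⟪x, w⟫_ℝ * ⟪y, w⟫_ℝ)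
    (hxν : ⟪x - s, ν⟫_ℝ ≤ 0) (hxw : ⟪x - s, w⟫_ℝ ≤ ε / 4)
    (hν : 1 / 2 < ⟪u θ, ν⟫_ℝ) (hw : 1 / 4 < ⟪u θ, w⟫_ℝ) (hρ : ⟪s, u θ⟫_ℝ - ε / 16 < ρ)
    (hx : x ∈ R θ ρ) : x ∈ closedBall s ε := by
  have hw1 : ⟪u θ, w⟫_ℝ ≤ 1 := by
    nlinarith [hframe (u θ) (u θ), real_inner_self_eq_norm_sq (u θ), norm_u θ]
  have hcut : -(ε / 16) ≤ ⟪u θ, ν⟫_ℝ * ⟪x - s, ν⟫_ℝ + ⟪u θ, w⟫_ℝ * ⟪x - s, w⟫_ℝ := by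
    have hx' : ρ ≤ ⟪x, u θ⟫_ℝ := hx
    rw [← hframe, real_inner_comm, inner_sub_left]
    linarith
  rw [mem_closedBall, dist_eq_norm, ← Real.sqrt_sq (norm_nonneg _),
    ← real_inner_self_eq_norm_sq, hframe, ← sq, ← sq]
  exact sqrt_sq_add_sq_le hxν hxw hν hw hw1 hcut

theorem G_inter_nonempty_of_isPreconnected {S : Set ℝ²} (hS : IsPreconnected S) {θ ρ : ℝ}
    {a b : ℝ²} (haS : a ∈ S) (hbS : b ∈ S) (ha : a ∉ R θ ρ) (hb : b ∈ R θ ρ) :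
    (G θ ρ ∩ S).Nonempty := by
  have ha' : ⟪a, u θ⟫_ℝ ≤ ρ := (not_le.mp ha).le
  obtain ⟨x, hxS, hx⟩ := hS.intermediate_value haS hbS
    (continuous_id.inner continuous_const).continuousOn ⟨ha', hb⟩
  exact ⟨x, hx, hxS⟩

theorem volume_lines_meeting_lt_top {Ω : Set ℝ²} (hΩ : IsBounded Ω) :
    volume {p : ℝ × ℝ | p ∈ Ico 0 (2 * π) ×ˢ (univ : Set ℝ) ∧ (G p.1 p.2 ∩ Ω).Nonempty} < ⊤ := by
  obtain ⟨M, hM⟩ := hΩ.subset_closedBall 0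
  refine (measure_mono ?_).trans_lt
    ((isBounded_Ico 0 (2 * π)).prod (isBounded_Icc (-M) M)).measure_lt_top
  rintro ⟨θ, ρ⟩ ⟨⟨hθ, -⟩, x, hxG : ⟪x, u θ⟫_ℝ = ρ, hxΩ⟩
  refine ⟨hθ, abs_le.mp ?_⟩
  calc |ρ| = |⟪x, u θ⟫_ℝ| := by rw [hxG]
    _ ≤ ‖x‖ * ‖u θ‖ := abs_real_inner_le_norm x (u θ)
    _ ≤ M := by simpa [norm_u] using hM hxΩ

/-- Lines with normal `u θ` within `π / 3` of `ν` and tilted towards `w` that pass at distance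
less than `δ` behind `s`; `θ` ranges over `(0, 2π)` rather than `[0, 2π)` to make the set open. -/
def tiltedLines (ν w s : ℝ²) (δ : ℝ) : Set (ℝ × ℝ) :=
  {p | p.1 ∈ Ioo 0 (2 * π) ∧ 1 / 2 < ⟪u p.1, ν⟫_ℝ ∧ 1 / 4 < ⟪u p.1, w⟫_ℝ ∧
    ⟪s, u p.1⟫_ℝ - δ < p.2 ∧ p.2 < ⟪s, u p.1⟫_ℝ}

theorem isOpen_tiltedLines (ν w s : ℝ²) (δ : ℝ) : IsOpen (tiltedLines ν w s δ) := by
  have hu : Continuous fun p : ℝ × ℝ => u p.1 := continuous_u.comp continuous_fst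
  refine (isOpen_Ioo.preimage continuous_fst).and
    ((isOpen_lt continuous_const (hu.inner continuous_const)).and
    ((isOpen_lt continuous_const (hu.inner continuous_const)).and
    ((isOpen_lt ?_ continuous_snd).and (isOpen_lt continuous_snd ?_)))) <;> fun_prop

theorem tiltedLines_nonempty {ν w : ℝ²} (s : ℝ²) {φ δ : ℝ} (hφ : φ ∈ Icc 0 (2 * π))
    (hν : 1 / 2 < ⟪u φ, ν⟫_ℝ) (hw : 1 / 4 < ⟪u φ, w⟫_ℝ) (hδ : 0 < δ) :
    (tiltedLines ν w s δ).Nonempty := by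
  have hT : IsOpen {θ | 1 / 2 < ⟪u θ, ν⟫_ℝ ∧ 1 / 4 < ⟪u θ, w⟫_ℝ} :=
    (isOpen_lt continuous_const (continuous_u.inner continuous_const)).and
      (isOpen_lt continuous_const (continuous_u.inner continuous_const))
  rw [← closure_Ioo (by positivity : (0 : ℝ) ≠ 2 * π)] at hφ
  obtain ⟨θ, ⟨hθν, hθw⟩, hθ⟩ := mem_closure_iff.mp hφ _ hT ⟨hν, hw⟩
  exact ⟨(θ, ⟪s, u θ⟫_ℝ - δ / 2), hθ, hθν, hθw, by linarith, by linarith⟩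

theorem exists_mem_Icc_inner_u_eq {ν w : ℝ²} (hν : ‖ν‖ = 1) (hw : ‖w‖ = 1) (hνw : ⟪ν, w⟫_ℝ = 0)
    (hframe : ∀ x y : ℝ², ⟪x, y⟫_ℝ = ⟪x, ν⟫_ℝ * ⟪y, ν⟫_ℝ + ⟪x, w⟫_ℝ * ⟪y, w⟫_ℝ)
    {a b : ℝ} (hab : a ^ 2 + b ^ 2 = 1) :
    ∃ φ ∈ Icc 0 (2 * π), ⟪u φ, ν⟫_ℝ = a ∧ ⟪u φ, w⟫_ℝ = b := by
  set p : ℝ² := a • ν + b • w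
  have hpν : ⟪p, ν⟫_ℝ = a := by
    simp [p, inner_add_left, real_inner_smul_left, hν, real_inner_comm ν w, hνw]
  have hpw : ⟪p, w⟫_ℝ = b := by
    simp [p, inner_add_left, real_inner_smul_left, hw, hνw]
  have hp : ‖p‖ = 1 := by
    rw [← pow_eq_one_iff_of_nonneg (norm_nonneg _) two_ne_zero, ← real_inner_self_eq_norm_sq,
      hframe, hpν, hpw, ← hab, sq, sq]
  obtain ⟨φ, hφ, hφp⟩ := exists_mem_Icc_u_eq hp
  exact ⟨φ, hφ, hφp ▸ hpν, hφp ▸ hpw⟩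

theorem tiltedLines_separate {Ω Γ S : Set ℝ²} {ν w s t : ℝ²} {ε : ℝ}
    (hSΩ : S ⊆ Ω) (hS : IsPreconnected S) (hsS : s ∈ S) (htS : t ∈ S)
    (htfar : t ∉ closedBall s ε) (hΓ : S ∩ closedBall s ε ⊆ Γ)
    (hframe : ∀ x y : ℝ², ⟪x, y⟫_ℝ = ⟪x, ν⟫_ℝ * ⟪y, ν⟫_ℝ + ⟪x, w⟫_ℝ * ⟪y, w⟫_ℝ)
    (hSν : ∀ x ∈ S, ⟪x - s, ν⟫_ℝ ≤ 0) (hSw : ∀ x ∈ S, ⟪x - s, w⟫_ℝ ≤ ε / 4)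
    {p : ℝ × ℝ} (hp : p ∈ tiltedLines ν w s (ε / 16)) :
    (G p.1 p.2 ∩ Ω).Nonempty ∧ s ∈ R p.1 p.2 ∧ (S \ Γ) ∩ R p.1 p.2 = ∅ := by
  obtain ⟨-, hν, hw, hρ, hρs⟩ := hp
  have hcap : ∀ x ∈ S, x ∈ R p.1 p.2 → x ∈ closedBall s ε := fun x hx =>
    mem_closedBall_of_mem_R hframe (hSν x hx) (hSw x hx) hν hw hρ
  have hsR : s ∈ R p.1 p.2 := hρs.le
  have htR : t ∉ R p.1 p.2 := fun h => htfar (hcap t htS h)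
  refine ⟨(G_inter_nonempty_of_isPreconnected hS htS hsS htR hsR).mono
    (inter_subset_inter_right _ hSΩ), hsR, ?_⟩
  rw [eq_empty_iff_forall_notMem]
  rintro x ⟨⟨hxS, hxΓ⟩, hxR⟩
  exact hxΓ (hΓ ⟨hxS, hcap x hxS hxR⟩)

theorem stmt_12_general (Ω K : Set (EuclideanSpace ℝ (Fin 2)))
    (hΩc : IsCompact Ω)
    (hKc : IsCompact K) (hKconv : Convex ℝ K) (hKint : (interior K).Nonempty)
    (hKΩ : K ⊆ Ω)
    (s t : EuclideanSpace ℝ (Fin 2)) (hs : s ∈ frontier K) (ht : t ∈ frontier K)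
    (ε : ℝ) (hε : 0 < ε) (htfar : t ∉ Metric.closedBall s ε)
    (Γ : Set (EuclideanSpace ℝ (Fin 2)))
    (hΓ : frontier K ∩ Metric.closedBall s ε ⊆ Γ) :
    volume {p : ℝ × ℝ | p ∈ Set.Ico 0 (2 * Real.pi) ×ˢ (Set.univ : Set ℝ) ∧
        (G p.1 p.2 ∩ Ω).Nonempty ∧
        ¬ ∃ S : Set (EuclideanSpace ℝ (Fin 2)), S ⊆ frontier K ∧ IsConnected S ∧
          s ∈ S ∧ t ∈ S ∧ (S \ Γ) ∩ R p.1 p.2 = ∅}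
      < volume {p : ℝ × ℝ | p ∈ Set.Ico 0 (2 * Real.pi) ×ˢ (Set.univ : Set ℝ) ∧
        (G p.1 p.2 ∩ Ω).Nonempty ∧
        ¬ ∃ S : Set (EuclideanSpace ℝ (Fin 2)), S ⊆ frontier K ∧ IsConnected S ∧
          s ∈ S ∧ t ∈ S ∧ S ∩ R p.1 p.2 = ∅} := by
  obtain ⟨ν, hν, hKν⟩ := exists_norm_eq_one_inner_sub_nonpos hKconv hKint hs.2
  obtain ⟨w, hw, hνw, htw, hframe⟩ := exists_orthonormal_frame hν (t - s)
  obtain ⟨S, hSK, hS, hsS, htS, hSw⟩ := exists_isConnected_subset_frontier_inner_sub_le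
    (by rw [← Module.finrank_eq_rank, finrank_euclideanSpace_fin]; norm_num) hKconv
    hKc.isBounded hKint hs ht hw htw (by positivity : 0 < ε / 4)
  obtain ⟨φ, hφ, hφν, hφw⟩ := exists_mem_Icc_inner_u_eq hν hw hνw hframe
    (by norm_num : (3 / 5 : ℝ) ^ 2 + (4 / 5) ^ 2 = 1)
  have hSK' : S ⊆ K := hSK.trans hKc.isClosed.frontier_subset
  have hB := isOpen_tiltedLines ν w s (ε / 16)
  refine measure_lt_measure_of_subset ?mono ?finite hB.measurableSet
    (hB.measure_pos _ (tiltedLines_nonempty s hφ (by linarith) (by linarith) (by positivity)))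
    fun p hp => ?_
  case finite =>
    refine (measure_lt_top_of_subset ?_ (volume_lines_meeting_lt_top hΩc.isBounded).ne).ne
    exact fun p hp => ⟨hp.1, hp.2.1⟩
  case mono =>
    rintro p ⟨hp, hGΩ, hnot⟩
    refine ⟨hp, hGΩ, fun ⟨S, hSK, hS, hsS, htS, hSR⟩ => hnot ⟨S, hSK, hS, hsS, htS, ?_⟩⟩
    exact subset_empty_iff.mp (hSR ▸ inter_subset_inter_left _ sdiff_subset)
  obtain ⟨hGΩ, hsR, hSR⟩ := tiltedLines_separate (hSK'.trans hKΩ) hS.isPreconnected hsS htS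
    htfar ((inter_subset_inter_left _ hSK).trans hΓ) hframe (fun x hx => hKν x (hSK' hx)) hSw hp
  refine ⟨⟨⟨Ioo_subset_Ico_self hp.1, mem_univ _⟩, hGΩ, ?_⟩,
    fun h => h.2.2 ⟨S, hSK, hS, hsS, htS, hSR⟩⟩
  rintro ⟨S', -, -, hsS', -, hS'R⟩
  exact hS'R.subset ⟨hsS', hsR⟩

/-- Theorem 4(1) of the paper for a convex two-route network: protection of a part
containing a neighbourhood of the terminal `s` in the network strictly improves the
probability of connecting `s` and `t` over the weakest arrangement. -/
theorem stmt_12 (Ω K : Set (EuclideanSpace ℝ (Fin 2)))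
    (hΩc : IsCompact Ω) (hΩconv : Convex ℝ Ω) (hΩint : (interior Ω).Nonempty)
    (hKc : IsCompact K) (hKconv : Convex ℝ K) (hKint : (interior K).Nonempty)
    (hKΩ : K ⊆ Ω)
    (s t : EuclideanSpace ℝ (Fin 2)) (hs : s ∈ frontier K) (ht : t ∈ frontier K)
    (hst : s ≠ t) (ε : ℝ) (hε : 0 < ε) (htfar : t ∉ Metric.closedBall s ε)
    (Γ : Set (EuclideanSpace ℝ (Fin 2)))
    (hΓ : frontier K ∩ Metric.closedBall s ε ⊆ Γ) :
    volume {p : ℝ × ℝ | p ∈ Set.Ico 0 (2 * Real.pi) ×ˢ (Set.univ : Set ℝ) ∧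
        (G p.1 p.2 ∩ Ω).Nonempty ∧
        ¬ ∃ S : Set (EuclideanSpace ℝ (Fin 2)), S ⊆ frontier K ∧ IsConnected S ∧
          s ∈ S ∧ t ∈ S ∧ (S \ Γ) ∩ R p.1 p.2 = ∅}
      < volume {p : ℝ × ℝ | p ∈ Set.Ico 0 (2 * Real.pi) ×ˢ (Set.univ : Set ℝ) ∧
        (G p.1 p.2 ∩ Ω).Nonempty ∧
        ¬ ∃ S : Set (EuclideanSpace ℝ (Fin 2)), S ⊆ frontier K ∧ IsConnected S ∧
          s ∈ S ∧ t ∈ S ∧ S ∩ R p.1 p.2 = ∅} :=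
  stmt_12_general Ω K hΩc hKc hKconv hKint hKΩ s t hs ht ε hε htfar Γ hΓ
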